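/- arXiv:2006.12087 — 2 statements merged into one kernel-verified Lean document; each statement's English description precedes it below -/
import Mathlib

section
/- Let P and Q be probability measures on X × Y, let H be a set of measurable hypotheses h : X → Y, and let the loss L be nonnegative, bounded, symmetric, and satisfy the triangle inequality. Then for any h ∈ H and any h* ∈ H: R_Q(h) ≤ R_P(h) + disc_H(Q_X, P_X) + R_Q(h*) + R_P(h*), where P_X and Q_X are the marginals on X. -/
/-!
Compare `h` with `h*` through the disagreement `E L(h(x), h*(x))`. By the triangle inequality,
`R_Q(h) ≤ E_{Q_X} L(h, h*) + R_Q(h*)`. The disagreement depends on the instance marginal only,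
so replacing `Q_X` by `P_X` costs at most `disc_H(Q_X, P_X)`. Finally, symmetry and the triangle
inequality through the label `y` give `E_{P_X} L(h, h*) ≤ R_P(h) + R_P(h*)`.

Since the label set is finite, `L` is bounded; this makes all the integrands integrable and the
set whose supremum defines `disc` bounded above.
-/

open MeasureTheory

/-- Risk `R_μ(h) = E_{(x,y)∼μ} L(h(x), y)`. -/
noncomputable def risk {X : Type*} [MeasurableSpace X] {n : ℕ}
    (L : Fin n → Fin n → ℝ) (μ : Measure (X × Fin n)) (h : X → Fin n) : ℝ :=
  ∫ p, L (h p.1) p.2 ∂μ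

/-- Discrepancy distance
`disc_H(ν, ν') = sup_{h,h'∈H} |E_{x∼ν} L(h(x), h'(x)) − E_{x∼ν'} L(h(x), h'(x))|`. -/
noncomputable def disc {X : Type*} [MeasurableSpace X] {n : ℕ}
    (L : Fin n → Fin n → ℝ) (H : Set (X → Fin n)) (ν ν' : Measure X) : ℝ :=
  sSup { r | ∃ h ∈ H, ∃ h' ∈ H,
    r = |(∫ x, L (h x) (h' x) ∂ν) - ∫ x, L (h x) (h' x) ∂ν'| }

noncomputable def disagreement {X Y : Type*} [MeasurableSpace X]
    (L : Y → Y → ℝ) (ν : Measure X) (h h' : X → Y) : ℝ :=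
  ∫ x, L (h x) (h' x) ∂ν

section FiniteLabels

variable {Z Y : Type*} [Finite Y] (L : Y → Y → ℝ)

theorem exists_forall_norm_le_of_finite : ∃ B, ∀ a b, ‖L a b‖ ≤ B := by
  obtain ⟨B, hB⟩ := (Set.finite_range fun p : Y × Y ↦ ‖L p.1 p.2‖).bddAbove
  exact ⟨B, fun a b ↦ hB ⟨(a, b), rfl⟩⟩

variable [MeasurableSpace Z] [MeasurableSpace Y] [MeasurableSingletonClass Y]
  {μ : Measure Z} {u v : Z → Y}

theorem measurable_loss_comp (hu : Measurable u) (hv : Measurable v) :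
    Measurable fun z ↦ L (u z) (v z) :=
  (measurable_of_finite (Function.uncurry L)).comp (hu.prodMk hv)

theorem integrable_loss_comp [IsFiniteMeasure μ] (hu : Measurable u) (hv : Measurable v) :
    Integrable (fun z ↦ L (u z) (v z)) μ := by
  obtain ⟨B, hB⟩ := exists_forall_norm_le_of_finite L
  exact .of_bound (measurable_loss_comp L hu hv).aestronglyMeasurable B
    (.of_forall fun z ↦ hB _ _)

theorem integral_loss_le_add [IsFiniteMeasure μ] (hL_tri : ∀ a b c, L a c ≤ L a b + L b c)
    {w : Z → Y} (hu : Measurable u) (hv : Measurable v) (hw : Measurable w) :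
    ∫ z, L (u z) (w z) ∂μ ≤ ∫ z, L (u z) (v z) ∂μ + ∫ z, L (v z) (w z) ∂μ := by
  rw [← integral_add (integrable_loss_comp L hu hv) (integrable_loss_comp L hv hw)]
  exact integral_mono (integrable_loss_comp L hu hw)
    ((integrable_loss_comp L hu hv).add (integrable_loss_comp L hv hw)) fun z ↦ hL_tri _ _ _

end FiniteLabels

section Disagreement

variable {X : Type*} [MeasurableSpace X] {n : ℕ} (L : Fin n → Fin n → ℝ)

theorem disagreement_map_fst (μ : Measure (X × Fin n)) {h h' : X → Fin n}
    (hh : Measurable h) (hh' : Measurable h') :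
    disagreement L (μ.map Prod.fst) h h' = ∫ p, L (h p.1) (h' p.1) ∂μ :=
  integral_map measurable_fst.aemeasurable (measurable_loss_comp L hh hh').aestronglyMeasurable

theorem abs_sub_disagreement_le_disc {H : Set (X → Fin n)} (ν ν' : Measure X)
    [IsFiniteMeasure ν] [IsFiniteMeasure ν']
    {h h' : X → Fin n} (hh : h ∈ H) (hh' : h' ∈ H) :
    |disagreement L ν h h' - disagreement L ν' h h'| ≤ disc L H ν ν' := by
  obtain ⟨B, hB⟩ := exists_forall_norm_le_of_finite L
  have abs_disagreement_le (μ : Measure X) [IsFiniteMeasure μ] (f g : X → Fin n) :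
      |disagreement L μ f g| ≤ B * μ.real Set.univ :=
    norm_integral_le_of_norm_le_const (.of_forall fun x ↦ hB _ _)
  refine le_csSup ⟨B * ν.real Set.univ + B * ν'.real Set.univ, ?_⟩ ⟨h, hh, h', hh', rfl⟩
  rintro _ ⟨f, -, g, -, rfl⟩
  exact (abs_sub _ _).trans
    (add_le_add (abs_disagreement_le ν f g) (abs_disagreement_le ν' f g))

variable (hL_tri : ∀ a b c, L a c ≤ L a b + L b c) (μ : Measure (X × Fin n)) [IsFiniteMeasure μ]
  {h h' : X → Fin n} (hh : Measurable h) (hh' : Measurable h')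
include hL_tri hh hh'

theorem risk_le_disagreement_add_risk :
    risk L μ h ≤ disagreement L (μ.map Prod.fst) h h' + risk L μ h' := by
  rw [disagreement_map_fst L μ hh hh']
  exact integral_loss_le_add L hL_tri (hh.comp measurable_fst) (hh'.comp measurable_fst)
    measurable_snd

theorem disagreement_le_risk_add_risk (hL_symm : ∀ a b, L a b = L b a) :
    disagreement L (μ.map Prod.fst) h h' ≤ risk L μ h + risk L μ h' := by
  have hrisk' : risk L μ h' = ∫ p, L p.2 (h' p.1) ∂μ := by simp only [risk, hL_symm _ (h' _)]
  rw [disagreement_map_fst L μ hh hh', hrisk']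
  exact integral_loss_le_add L hL_tri (hh.comp measurable_fst) measurable_snd
    (hh'.comp measurable_fst)

end Disagreement

theorem target_risk_bound_via_ideal_hypothesis_general
    {X : Type*} [MeasurableSpace X] (C : ℕ)
    (L : Fin (C + 1) → Fin (C + 1) → ℝ)
    (hL_symm : ∀ a b, L a b = L b a)
    (hL_tri : ∀ a b c, L a c ≤ L a b + L b c)
    (P Q : Measure (X × Fin (C + 1)))
    [IsProbabilityMeasure P] [IsProbabilityMeasure Q]
    (H : Set (X → Fin (C + 1))) (hH_meas : ∀ h ∈ H, Measurable h)
    (h : X → Fin (C + 1)) (hh : h ∈ H)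
    (hstar : X → Fin (C + 1)) (hhstar : hstar ∈ H) :
    risk L Q h ≤ risk L P h + disc L H (Q.map Prod.fst) (P.map Prod.fst)
      + risk L Q hstar + risk L P hstar := by
  have hmeas := hH_meas h hh
  have hmeas_star := hH_meas hstar hhstar
  calc risk L Q h ≤ disagreement L (Q.map Prod.fst) h hstar + risk L Q hstar :=
        risk_le_disagreement_add_risk L hL_tri Q hmeas hmeas_star
    _ ≤ disagreement L (P.map Prod.fst) h hstar + disc L H (Q.map Prod.fst) (P.map Prod.fst)
          + risk L Q hstar := by
        gcongr
        exact sub_le_iff_le_add'.1 <| (le_abs_self _).trans <|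
          abs_sub_disagreement_le_disc L (Q.map Prod.fst) (P.map Prod.fst) hh hhstar
    _ ≤ risk L P h + risk L P hstar + disc L H (Q.map Prod.fst) (P.map Prod.fst)
          + risk L Q hstar := by
        gcongr
        exact disagreement_le_risk_add_risk L hL_tri P hmeas hmeas_star hL_symm
    _ = _ := by ring

theorem target_risk_bound_via_ideal_hypothesis
    {X : Type*} [MeasurableSpace X] (C : ℕ) (hC : 1 ≤ C)
    (L : Fin (C + 1) → Fin (C + 1) → ℝ) (M : ℝ)
    (hL_nonneg : ∀ a b, 0 ≤ L a b) (hL_bdd : ∀ a b, L a b ≤ M)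
    (hL_symm : ∀ a b, L a b = L b a)
    (hL_tri : ∀ a b c, L a c ≤ L a b + L b c)
    (P Q : Measure (X × Fin (C + 1)))
    [IsProbabilityMeasure P] [IsProbabilityMeasure Q]
    (H : Set (X → Fin (C + 1))) (hH_meas : ∀ h ∈ H, Measurable h)
    (h : X → Fin (C + 1)) (hh : h ∈ H)
    (hstar : X → Fin (C + 1)) (hhstar : hstar ∈ H) :
    risk L Q h ≤ risk L P h + disc L H (Q.map Prod.fst) (P.map Prod.fst)
      + risk L Q hstar + risk L P hstar :=
  target_risk_bound_via_ideal_hypothesis_general C L hL_symm hL_tri P Q H hH_meas h hh hstar hhstar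
end

section
/- (Closed-set unsupervised domain adaptation bound.) Let P (source) and Q (target) be probability measures on X × Y, let H be a nonempty set of measurable hypotheses, and let the loss L be nonnegative, bounded, symmetric, and satisfy the triangle inequality. Then for every h ∈ H: R_Q(h) ≤ R_P(h) + disc_H(Q_X, P_X) + λ', where λ' = inf_{h'∈H} (R_Q(h') + R_P(h')) and P_X, Q_X are the marginals on X. -/
/-!
Fix `h' ∈ H` and write `d_ν(h, h') = E_ν L(h(x), h'(x))`. The triangle inequality through
`h'(x)` gives `R_Q(h) ≤ d_{Q_X}(h, h') + R_Q(h')`; by definition of the discrepancy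
`d_{Q_X}(h, h') ≤ d_{P_X}(h, h') + disc_H(Q_X, P_X)`; and the triangle inequality through the
label `y`, together with symmetry, gives `d_{P_X}(h, h') ≤ R_P(h) + R_P(h')`. Chaining the three
and taking the infimum over `h'` proves the bound.
-/

open MeasureTheory ProbabilityTheory

section Loss

variable {α : Type*} [MeasurableSpace α] {n : ℕ} (L : Fin n → Fin n → ℝ)

lemma integrable_loss_comp_s5 (μ : Measure α) [IsFiniteMeasure μ] {f g : α → Fin n}
    (hf : Measurable f) (hg : Measurable g) : Integrable (fun a => L (f a) (g a)) μ :=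
  (Integrable.of_finite (f := Function.uncurry L)).comp_measurable (hf.prodMk hg)

lemma exists_abs_loss_le : ∃ c, ∀ a b, |L a b| ≤ c := by
  obtain ⟨c, hc⟩ := Finite.bddAbove_range fun p : Fin n × Fin n => |L p.1 p.2|
  exact ⟨c, fun a b => hc ⟨(a, b), rfl⟩⟩

lemma abs_integral_loss_le (ν : Measure α) [IsFiniteMeasure ν] {c : ℝ}
    (hc : ∀ a b, |L a b| ≤ c) (f g : α → Fin n) :
    |∫ x, L (f x) (g x) ∂ν| ≤ c * ν.real Set.univ :=
  norm_integral_le_of_norm_le_const (f := fun x => L (f x) (g x))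
    (.of_forall fun x => hc (f x) (g x))

lemma abs_sub_integral_loss_le_disc {H : Set (α → Fin n)} (ν ν' : Measure α)
    [IsFiniteMeasure ν] [IsFiniteMeasure ν'] {h h' : α → Fin n}
    (hh : h ∈ H) (hh' : h' ∈ H) :
    |(∫ x, L (h x) (h' x) ∂ν) - ∫ x, L (h x) (h' x) ∂ν'| ≤ disc L H ν ν' := by
  obtain ⟨c, hc⟩ := exists_abs_loss_le L
  refine le_csSup ⟨c * ν.real Set.univ + c * ν'.real Set.univ, ?_⟩ ⟨h, hh, h', hh', rfl⟩
  rintro r ⟨f, -, g, -, rfl⟩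
  exact (abs_sub _ _).trans
    (add_le_add (abs_integral_loss_le L ν hc f g) (abs_integral_loss_le L ν' hc f g))

end Loss

section Risk

variable {X : Type*} [MeasurableSpace X] {n : ℕ} {L : Fin n → Fin n → ℝ}
  (μ : Measure (X × Fin n)) [IsFiniteMeasure μ] {h h' : X → Fin n}

lemma integral_loss_map_fst (hh : Measurable h) (hh' : Measurable h') :
    ∫ x, L (h x) (h' x) ∂(μ.map Prod.fst) = ∫ p, L (h p.1) (h' p.1) ∂μ :=
  integral_map measurable_fst.aemeasurable
    (integrable_loss_comp_s5 L (μ.map Prod.fst) hh hh').aestronglyMeasurable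

lemma risk_le_integral_loss_add_risk (hL_tri : ∀ a b c, L a c ≤ L a b + L b c)
    (hh : Measurable h) (hh' : Measurable h') :
    risk L μ h ≤ ∫ x, L (h x) (h' x) ∂(μ.map Prod.fst) + risk L μ h' := by
  have hh₁ : Measurable fun p : X × Fin n => h p.1 := hh.comp measurable_fst
  have hh'₁ : Measurable fun p : X × Fin n => h' p.1 := hh'.comp measurable_fst
  rw [integral_loss_map_fst μ hh hh', risk, risk,
    ← integral_add (integrable_loss_comp_s5 L μ hh₁ hh'₁)
      (integrable_loss_comp_s5 L μ hh'₁ measurable_snd)]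
  exact integral_mono (integrable_loss_comp_s5 L μ hh₁ measurable_snd)
    ((integrable_loss_comp_s5 L μ hh₁ hh'₁).add (integrable_loss_comp_s5 L μ hh'₁ measurable_snd))
    fun p => hL_tri _ _ _

lemma integral_loss_map_fst_le_risk_add_risk (hL_symm : ∀ a b, L a b = L b a)
    (hL_tri : ∀ a b c, L a c ≤ L a b + L b c) (hh : Measurable h) (hh' : Measurable h') :
    ∫ x, L (h x) (h' x) ∂(μ.map Prod.fst) ≤ risk L μ h + risk L μ h' := by
  have hh₁ : Measurable fun p : X × Fin n => h p.1 := hh.comp measurable_fst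
  have hh'₁ : Measurable fun p : X × Fin n => h' p.1 := hh'.comp measurable_fst
  simp only [integral_loss_map_fst μ hh hh', risk, hL_symm (h' _)]
  rw [← integral_add (integrable_loss_comp_s5 L μ hh₁ measurable_snd)
    (integrable_loss_comp_s5 L μ measurable_snd hh'₁)]
  exact integral_mono (integrable_loss_comp_s5 L μ hh₁ hh'₁)
    ((integrable_loss_comp_s5 L μ hh₁ measurable_snd).add
      (integrable_loss_comp_s5 L μ measurable_snd hh'₁))
    fun p => hL_tri _ _ _

end Risk

lemma risk_le_risk_add_disc_add_joint_risk {X : Type*} [MeasurableSpace X] {n : ℕ}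
    {L : Fin n → Fin n → ℝ} (hL_symm : ∀ a b, L a b = L b a)
    (hL_tri : ∀ a b c, L a c ≤ L a b + L b c) (P Q : Measure (X × Fin n))
    [IsFiniteMeasure P] [IsFiniteMeasure Q] {H : Set (X → Fin n)}
    (hH_meas : ∀ h ∈ H, Measurable h) {h h' : X → Fin n} (hh : h ∈ H) (hh' : h' ∈ H) :
    risk L Q h ≤ risk L P h + disc L H (Q.map Prod.fst) (P.map Prod.fst)
      + (risk L Q h' + risk L P h') := by
  have hQ := risk_le_integral_loss_add_risk Q hL_tri (hH_meas h hh) (hH_meas h' hh')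
  have hP :=
    integral_loss_map_fst_le_risk_add_risk P hL_symm hL_tri (hH_meas h hh) (hH_meas h' hh')
  have hdisc := abs_sub_integral_loss_le_disc L (Q.map Prod.fst) (P.map Prod.fst) hh hh'
  linarith [le_abs_self ((∫ x, L (h x) (h' x) ∂(Q.map Prod.fst))
    - ∫ x, L (h x) (h' x) ∂(P.map Prod.fst))]

theorem closed_set_uda_bound_general
    {X : Type*} [MeasurableSpace X] (C : ℕ)
    (L : Fin (C + 1) → Fin (C + 1) → ℝ)
    (hL_symm : ∀ a b, L a b = L b a)
    (hL_tri : ∀ a b c, L a c ≤ L a b + L b c)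
    (P Q : Measure (X × Fin (C + 1)))
    [IsProbabilityMeasure P] [IsProbabilityMeasure Q]
    (H : Set (X → Fin (C + 1)))
    (hH_meas : ∀ h ∈ H, Measurable h)
    (h : X → Fin (C + 1)) (hh : h ∈ H) :
    risk L Q h ≤ risk L P h + disc L H (Q.map Prod.fst) (P.map Prod.fst)
      + sInf { r | ∃ h' ∈ H, r = risk L Q h' + risk L P h' } := by
  suffices risk L Q h - risk L P h - disc L H (Q.map Prod.fst) (P.map Prod.fst)
      ≤ sInf { r | ∃ h' ∈ H, r = risk L Q h' + risk L P h' } by linarith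
  refine le_csInf ⟨_, h, hh, rfl⟩ ?_
  rintro r ⟨h', hh', rfl⟩
  linarith [risk_le_risk_add_disc_add_joint_risk hL_symm hL_tri P Q hH_meas hh hh']

theorem closed_set_uda_bound
    {X : Type*} [MeasurableSpace X] (C : ℕ) (hC : 1 ≤ C)
    (L : Fin (C + 1) → Fin (C + 1) → ℝ) (M : ℝ)
    (hL_nonneg : ∀ a b, 0 ≤ L a b) (hL_bdd : ∀ a b, L a b ≤ M)
    (hL_symm : ∀ a b, L a b = L b a)
    (hL_tri : ∀ a b c, L a c ≤ L a b + L b c)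
    (P Q : Measure (X × Fin (C + 1)))
    [IsProbabilityMeasure P] [IsProbabilityMeasure Q]
    (H : Set (X → Fin (C + 1))) (hH_ne : H.Nonempty)
    (hH_meas : ∀ h ∈ H, Measurable h)
    (h : X → Fin (C + 1)) (hh : h ∈ H) :
    risk L Q h ≤ risk L P h + disc L H (Q.map Prod.fst) (P.map Prod.fst)
      + sInf { r | ∃ h' ∈ H, r = risk L Q h' + risk L P h' } :=
  closed_set_uda_bound_general C L hL_symm hL_tri P Q H hH_meas h hh
end
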